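/- Let M be the L*-structure built from a tree plan Γ, a countably infinite set S, and for each σ ∈ I(Γ) an ℵ₀-categorical, algebraically trivial, quantifier-eliminating theory T_σ with exactly one 1-type, via the construction identifying each component with a fixed countable model N_σ of T_σ. Then for any finite tree-closed A ⊆ Γ(S) and distinct e, e' ∈ Γ(S), if tp_Γ(e/A) = tp_Γ(e'/A) and, letting b ≤ e and b' ≤ e' be such that pred(b) = e ⊓ e' = pred(b'), tp^{M(b)}(b/A∩M(b)) = tp^{M(b)}(b'/A∩M(b)), then there is an automorphism g ∈ Aut(M/A) with g(e) = e'. -/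

import Mathlib

namespace TreePlanDef

/-- Nodes of `Γ(X)` live among finite sequences of pairs `(i, t)` with `i : ℕ` and
`t : Option S` (`none` plays the role of `⋆`, `some x` an element of `X ⊆ S`). -/
abbrev PreNode (S : Type*) := List (ℕ × Option S)

/-- The projection `π` onto the first coordinates. -/
def proj {S : Type*} (a : PreNode S) : List ℕ := a.map Prod.fst

/-- Membership in `Γ(X)`: the projection is a node of `Γ`, and for each `k`, the second
coordinate of the `k`-th entry is `⋆ = none` if `λ` of the corresponding initial segment
is `1` (`lam = false`) and an element of `X` if it is `∞` (`lam = true`). -/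
def memGamma {S : Type*} (Γ : Finset (List ℕ)) (lam : List ℕ → Bool) (X : Set S)
    (a : PreNode S) : Prop :=
  proj a ∈ Γ ∧
    ∀ (k : ℕ) (h : k < a.length),
      (lam (proj (a.take (k + 1))) = false → (a.get ⟨k, h⟩).2 = none) ∧
      (lam (proj (a.take (k + 1))) = true → ∃ x ∈ X, (a.get ⟨k, h⟩).2 = some x)

open Classical in
/-- The meet (longest common prefix) of two nodes. -/
noncomputable def meet {S : Type*} : PreNode S → PreNode S → PreNode S
  | [], _ => []
  | _, [] => []
  | (x :: xs), (y :: ys) => if x = y then x :: meet xs ys else []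

end TreePlanDef


namespace TreePlanDef

variable {S : Type*}

/-- The stages of the tree-closure operator on subsets of `Γ(X)`. -/
def tclN (Γ : Finset (List ℕ)) (lam : List ℕ → Bool) (X : Set S) :
    ℕ → Set (PreNode S) → Set (PreNode S)
  | 0, B => {([] : PreNode S)} ∪ {a : PreNode S | ∃ b ∈ B, a <+: b}
  | n + 1, B => tclN Γ lam X n B ∪
      {a : PreNode S | memGamma Γ lam X a ∧ lam (proj a) = false ∧
        a.dropLast ∈ tclN Γ lam X n B}

/-- The tree-closure `tcl(B) = ⋃ₙ tclₙ(B)`. -/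
def tclSet (Γ : Finset (List ℕ)) (lam : List ℕ → Bool) (X : Set S)
    (B : Set (PreNode S)) : Set (PreNode S) :=
  ⋃ n, tclN Γ lam X n B

/-- The universe of the tree `Γ(S)` (every label from `S` allowed: `X = univ`). -/
def NodeSet (Γ : Finset (List ℕ)) (lam : List ℕ → Bool) (S : Type*) :
    Set (PreNode S) :=
  {a : PreNode S | memGamma Γ lam (Set.univ : Set S) a}

/-- A permutation of finite sequences is a tree automorphism of `Γ(S)` if it preserves
the universe `Γ(S)` (in both directions), the projection `π`, and the predecessor
function; this characterizes automorphisms of the tree structure `Γ(S)`. -/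
def IsTreeAuto (Γ : Finset (List ℕ)) (lam : List ℕ → Bool)
    (g : Equiv.Perm (PreNode S)) : Prop :=
  (∀ a ∈ NodeSet Γ lam S, g a ∈ NodeSet Γ lam S) ∧
  (∀ a ∈ NodeSet Γ lam S, g⁻¹ a ∈ NodeSet Γ lam S) ∧
  (∀ a ∈ NodeSet Γ lam S, proj (g a) = proj a) ∧
  (∀ a ∈ NodeSet Γ lam S, g a.dropLast = (g a).dropLast)

/-- The component `M(e) = {x : pred x = pred e ∧ π x = π e}`. -/
def Mc (Γ : Finset (List ℕ)) (lam : List ℕ → Bool) (e : PreNode S) :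
    Set (PreNode S) :=
  {x ∈ NodeSet Γ lam S | x.dropLast = e.dropLast ∧ proj x = proj e}

end TreePlanDef

open TreePlanDef List

namespace TreePlanDef

variable {S : Type*}

/-- Compatibility of a permutation of `Γ(S)` with the component structures: on each
infinite component (children of `b` along an infinity node `(proj b) ++ [k]`), the map
induced on the labels in `S` agrees on every finite set with some automorphism
`hh ∈ H ((proj b) ++ [k])` of the component model `N_σ` (whose universe is identified
with `S` via the fixed bijection `f_σ`).  Together with being a tree automorphism this
characterizes membership in `Aut(M)` for the constructed structure `M`. -/
def Compat (Γ : Finset (List ℕ)) (lam : List ℕ → Bool)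
    (H : List ℕ → Set (Equiv.Perm S)) (g : Equiv.Perm (PreNode S)) : Prop :=
  ∀ b ∈ NodeSet Γ lam S, ∀ k : ℕ, proj b ++ [k] ∈ Γ → lam (proj b ++ [k]) = true →
    ∀ F : Finset S, ∃ hh ∈ H (proj b ++ [k]), ∀ t ∈ F,
      g (b ++ [(k, some t)]) = g b ++ [(k, some (hh t))]

/-- The automorphism group of the constructed structure `M`. -/
def AutM (Γ : Finset (List ℕ)) (lam : List ℕ → Bool)
    (H : List ℕ → Set (Equiv.Perm S)) : Set (Equiv.Perm (PreNode S)) :=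
  {g : Equiv.Perm (PreNode S) |
    IsTreeAuto Γ lam g ∧ Compat Γ lam H g ∧ Compat Γ lam H g⁻¹}

end TreePlanDef

/-! The automorphism is built by walking up `e` and changing one label at a time. Below the meet
`e ⊓ e'` nothing moves. At the level of `b` the given element of `H (π b)` sends the label of `b`
to that of `b'` while fixing the labels of `A ∩ M(b)`. Above `b'` the set `A` has nothing left:
it is closed under initial segments, and `b' ∉ A` since otherwise that element would fix the
label of `b'` as well as send the label of `b` to it. Transitivity of each `H σ` then moves the
remaining labels freely. A single move relabels the children of one node by an element of
`H σ`, and such a relabelling lies in `Aut(M)`. -/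

namespace TreePlanDef

variable {S : Type*} {Γ : Finset (List ℕ)} {lam : List ℕ → Bool}
  {H : List ℕ → Set (Equiv.Perm S)} {A : Set (PreNode S)}

@[simp] lemma proj_nil : proj ([] : PreNode S) = [] := rfl

@[simp] lemma proj_cons (x : ℕ × Option S) (a : PreNode S) : proj (x :: a) = x.1 :: proj a :=
  rfl

@[simp] lemma proj_append (a c : PreNode S) : proj (a ++ c) = proj a ++ proj c :=
  List.map_append

lemma proj_take (a : PreNode S) (n : ℕ) : proj (a.take n) = (proj a).take n :=
  List.map_take

lemma length_proj (a : PreNode S) : (proj a).length = a.length :=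
  List.length_map _

lemma take_mem_of_forall_dropLast_mem {α : Type*} {T : Set (List α)}
    (hT : ∀ l ∈ T, l.dropLast ∈ T) {l : List α} (hl : l ∈ T) (n : ℕ) :
    l.take n ∈ T := by
  induction l using List.reverseRecOn with
  | nil => simpa using hl
  | append_singleton l a ih =>
    rcases le_or_gt n l.length with hn | hn
    · rw [List.take_append_of_le_length hn]
      exact ih (by simpa using hT _ hl)
    · rwa [List.take_of_length_le (by simpa using hn)]

lemma mem_nodeSet_iff {a : PreNode S} :
    a ∈ NodeSet Γ lam S ↔
      proj a ∈ Γ ∧ ∀ i (hi : i < a.length), a[i].2.isSome = lam (proj (a.take (i + 1))) := by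
  simp only [NodeSet, memGamma, Set.mem_ofPred_eq, Set.mem_univ, true_and, List.get_eq_getElem]
  refine and_congr_right fun _ => forall₂_congr fun i hi => ?_
  cases lam (proj (a.take (i + 1))) <;> cases a[i].2 <;> simp

/-- Membership in `Γ(S)` only sees the indices and which labels are `⋆`. -/
def shape (a : PreNode S) : List (ℕ × Bool) := a.map (Prod.map id Option.isSome)

lemma proj_eq_of_shape_eq {a b : PreNode S} (h : shape a = shape b) : proj a = proj b := by
  simpa [shape, proj, List.map_map, Function.comp_def] using congrArg (List.map Prod.fst) h

lemma mem_nodeSet_congr {a b : PreNode S}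
    (h : shape a = shape b) : a ∈ NodeSet Γ lam S ↔ b ∈ NodeSet Γ lam S := by
  have hlen : a.length = b.length := by simpa [shape] using congrArg List.length h
  have hentry : ∀ i (hi : i < a.length), a[i].2.isSome = (b[i]'(hlen ▸ hi)).2.isSome :=
    fun i hi => by
      simpa [shape] using congrArg Prod.snd (List.getElem_of_eq h (by simpa [shape] using hi))
  simp only [mem_nodeSet_iff, proj_take, proj_eq_of_shape_eq h, hlen]
  exact and_congr_right fun _ => forall₂_congr fun i hi => by rw [hentry i (hlen ▸ hi)]

lemma isSome_eq_lam_of_append_cons_mem {q x : PreNode S} {a : ℕ × Option S}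
    (h : q ++ a :: x ∈ NodeSet Γ lam S) : a.2.isSome = lam (proj q ++ [a.1]) := by
  simpa [List.take_append, List.getElem_append_right,
    List.take_of_length_le (Nat.le_succ q.length)] using
    (mem_nodeSet_iff.1 h).2 q.length (by simp)

lemma proj_append_singleton_mem_of_append_cons_mem (hclosed : ∀ l ∈ Γ, l.dropLast ∈ Γ)
    {q x : PreNode S} {a : ℕ × Option S} (h : q ++ a :: x ∈ NodeSet Γ lam S) :
    proj q ++ [a.1] ∈ Γ := by
  simpa [List.take_append, List.take_of_length_le (by simp [length_proj] :
    (proj q).length ≤ q.length + 1), length_proj] using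
    take_mem_of_forall_dropLast_mem (T := (Γ : Set (List ℕ))) hclosed h.1 (q.length + 1)

lemma prefix_mem_of_tclSet_eq {X : Set S}
    (hA : tclSet Γ lam X A = A) {z c : PreNode S} (hz : z ∈ A) (hc : c <+: z) : c ∈ A :=
  hA ▸ Set.mem_iUnion.2 ⟨0, Or.inr ⟨z, hz, hc⟩⟩

lemma meet_append_not_prefix {z : ℕ × Option S} :
    ∀ {x y : PreNode S}, meet x y ++ [z] <+: x → ¬ meet x y ++ [z] <+: y
  | [], _, hx, _ => by simp [meet] at hx
  | _ :: _, [], _, hy => by simp [meet] at hy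
  | a :: x, b :: y, hx, hy => by
    by_cases hab : a = b
    · subst hab
      rw [meet, if_pos rfl] at hx hy
      simp only [List.cons_append, List.cons_prefix_cons, true_and] at hx hy
      exact meet_append_not_prefix hx hy
    · simp [meet, hab] at hx hy
      exact hab (hx.symm.trans hy)

section Relabel

variable (p : PreNode S) (φ : Equiv.Perm (ℕ × Option S))

open Classical in
noncomputable def relabel (a : PreNode S) : PreNode S :=
  if p <+: a then p ++ (a.drop p.length).modifyHead φ else a

variable {p φ}

lemma relabel_append (l : PreNode S) : relabel p φ (p ++ l) = p ++ l.modifyHead φ := by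
  simp [relabel]

@[simp] lemma relabel_self : relabel p φ p = p := by
  simpa using relabel_append (φ := φ) []

lemma relabel_of_not_prefix {a : PreNode S} (h : ¬ p <+: a) : relabel p φ a = a :=
  if_neg h

lemma relabel_inv_relabel (a : PreNode S) : relabel p φ⁻¹ (relabel p φ a) = a := by
  by_cases h : p <+: a
  · obtain ⟨l, rfl⟩ := h
    rw [relabel_append, relabel_append, List.modifyHead_modifyHead, ← Equiv.Perm.coe_mul,
      inv_mul_cancel, Equiv.Perm.coe_one, List.modifyHead_id, id]
  · rw [relabel_of_not_prefix h, relabel_of_not_prefix h]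

lemma relabel_dropLast (a : PreNode S) : relabel p φ a.dropLast = (relabel p φ a).dropLast := by
  by_cases h : p <+: a
  · obtain ⟨l, rfl⟩ := h
    rcases eq_or_ne l [] with rfl | hl
    · by_cases hp : p <+: p.dropLast
      · have hpd : p.dropLast = p := (hp.eq_of_length_le p.dropLast_prefix.length_le).symm
        simp only [List.append_nil, relabel_self, hpd]
      · simp [relabel_of_not_prefix hp]
    · rw [List.dropLast_append_of_ne_nil hl, relabel_append, relabel_append,
        List.dropLast_append_of_ne_nil (by cases l <;> simp_all), List.modifyHead_dropLast]
  · rw [relabel_of_not_prefix h,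
      relabel_of_not_prefix fun h' => h (h'.trans a.dropLast_prefix)]

lemma relabel_append_singleton {b : PreNode S} {x : ℕ × Option S} (hx : b = p → φ x = x) :
    relabel p φ (b ++ [x]) = relabel p φ b ++ [x] := by
  by_cases hb : p <+: b
  · obtain ⟨l, rfl⟩ := hb
    cases l with
    | nil => simp [relabel_append, hx]
    | cons y l => simp [relabel_append]
  · by_cases hbx : p <+: b ++ [x]
    · obtain rfl | hb' := List.prefix_concat_iff.1 hbx
      · simp [relabel_of_not_prefix hb]
      · exact absurd hb' hb
    · rw [relabel_of_not_prefix hbx, relabel_of_not_prefix hb]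

lemma relabel_eq_self {a : PreNode S} (h : ∀ x, p ++ [x] <+: a → φ x = x) :
    relabel p φ a = a := by
  by_cases hp : p <+: a
  · obtain ⟨l, rfl⟩ := hp
    cases l with
    | nil => simp
    | cons x l => simp [relabel_append, h x (by simp)]
  · exact relabel_of_not_prefix hp

lemma shape_relabel (hφ : ∀ x, Prod.map id Option.isSome (φ x) = Prod.map id Option.isSome x)
    (a : PreNode S) : shape (relabel p φ a) = shape a := by
  by_cases h : p <+: a
  · obtain ⟨l, rfl⟩ := h
    cases l <;> simp [relabel_append, shape, hφ]
  · rw [relabel_of_not_prefix h]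

variable (p φ)

noncomputable def relabelPerm : Equiv.Perm (PreNode S) where
  toFun := relabel p φ
  invFun := relabel p φ⁻¹
  left_inv := relabel_inv_relabel
  right_inv a := by simpa using relabel_inv_relabel (φ := φ⁻¹) a

@[simp] lemma relabelPerm_apply (a : PreNode S) : relabelPerm p φ a = relabel p φ a := rfl

lemma relabelPerm_inv : (relabelPerm p φ)⁻¹ = relabelPerm p φ⁻¹ := rfl

variable {p φ}

lemma isTreeAuto_relabelPerm
    (hφ : ∀ x, Prod.map id Option.isSome (φ x) = Prod.map id Option.isSome x) :
    IsTreeAuto Γ lam (relabelPerm p φ) := by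
  have hφinv : ∀ x, Prod.map id Option.isSome (φ⁻¹ x) = Prod.map id Option.isSome x :=
    fun x => by simpa using (hφ (φ⁻¹ x)).symm
  exact ⟨fun a ha => (mem_nodeSet_congr (shape_relabel hφ a)).2 ha,
    fun a ha => (mem_nodeSet_congr (shape_relabel hφinv a)).2 ha,
    fun a _ => proj_eq_of_shape_eq (shape_relabel hφ a),
    fun a _ => relabel_dropLast a⟩

end Relabel

def labelPerm (k : ℕ) (h : Equiv.Perm S) : Equiv.Perm (ℕ × Option S) :=
  (Equiv.refl ℕ).prodShear fun j => if j = k then h.optionCongr else Equiv.refl _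

lemma labelPerm_apply (k : ℕ) (h : Equiv.Perm S) (x : ℕ × Option S) :
    labelPerm k h x = (x.1, if x.1 = k then x.2.map h else x.2) := by
  by_cases hk : x.1 = k <;> simp [labelPerm, hk]

@[simp] lemma labelPerm_self (k : ℕ) (h : Equiv.Perm S) (t : S) :
    labelPerm k h (k, some t) = (k, some (h t)) := by
  simp [labelPerm]

lemma labelPerm_of_ne {j k : ℕ} (h : Equiv.Perm S) (o : Option S) (hjk : j ≠ k) :
    labelPerm k h (j, o) = (j, o) := by
  simp [labelPerm, hjk]

lemma labelPerm_inv (k : ℕ) (h : Equiv.Perm S) : (labelPerm k h)⁻¹ = labelPerm k h⁻¹ := by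
  refine (eq_inv_of_mul_eq_one_left ?_).symm
  ext ⟨j, o⟩ : 1
  rcases eq_or_ne j k with rfl | hk <;>
    simp [labelPerm_apply, *, Option.map_map, Function.comp_def]

lemma shape_labelPerm (k : ℕ) (h : Equiv.Perm S) (x : ℕ × Option S) :
    Prod.map id Option.isSome (labelPerm k h x) = Prod.map id Option.isSome x := by
  rw [labelPerm_apply]
  split_ifs <;> simp [Prod.map]

lemma isTreeAuto_one : IsTreeAuto Γ lam (1 : Equiv.Perm (PreNode S)) :=
  ⟨fun _ ha => ha, fun _ ha => ha, fun _ _ => rfl, fun _ _ => rfl⟩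

lemma isTreeAuto_inv {g : Equiv.Perm (PreNode S)} (hg : IsTreeAuto Γ lam g) :
    IsTreeAuto Γ lam g⁻¹ := by
  obtain ⟨hmem, hmem_inv, hproj, hdropLast⟩ := hg
  refine ⟨hmem_inv, fun a ha => by simpa using hmem a ha, fun a ha => ?_, fun a ha => ?_⟩
  · simpa using (hproj _ (hmem_inv a ha)).symm
  · apply g.injective
    simpa using (hdropLast _ (hmem_inv a ha)).symm

lemma isTreeAuto_mul {f g : Equiv.Perm (PreNode S)} (hf : IsTreeAuto Γ lam f)
    (hg : IsTreeAuto Γ lam g) : IsTreeAuto Γ lam (f * g) := by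
  refine ⟨fun a ha => hf.1 _ (hg.1 a ha), fun a ha => ?_, fun a ha => ?_, fun a ha => ?_⟩
  · rw [mul_inv_rev]
    exact hg.2.1 _ (hf.2.1 a ha)
  · simp only [Equiv.Perm.coe_mul, Function.comp_apply, hf.2.2.1 _ (hg.1 a ha), hg.2.2.1 a ha]
  · simp only [Equiv.Perm.coe_mul, Function.comp_apply, hg.2.2.2 a ha, hf.2.2.2 _ (hg.1 a ha)]

lemma compat_one (hHone : ∀ σ, (1 : Equiv.Perm S) ∈ H σ) :
    Compat Γ lam H (1 : Equiv.Perm (PreNode S)) :=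
  fun _ _ _ _ _ _ => ⟨1, hHone _, fun _ _ => rfl⟩

lemma compat_mul (hHmul : ∀ σ, ∀ h₁ ∈ H σ, ∀ h₂ ∈ H σ, h₁ * h₂ ∈ H σ)
    {f g : Equiv.Perm (PreNode S)} (hf : Compat Γ lam H f) (hg : Compat Γ lam H g)
    (hg_tree : IsTreeAuto Γ lam g) : Compat Γ lam H (f * g) := by
  classical
  intro b hb k hΓ hlam F
  obtain ⟨hg₁, hg₁H, hg₁b⟩ := hg b hb k hΓ hlam F
  have hpb : proj (g b) = proj b := hg_tree.2.2.1 b hb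
  obtain ⟨hf₁, hf₁H, hf₁b⟩ :=
    hf (g b) (hg_tree.1 b hb) k (by rwa [hpb]) (by rwa [hpb]) (F.image hg₁)
  refine ⟨hf₁ * hg₁, hHmul _ hf₁ (by rwa [hpb] at hf₁H) hg₁ hg₁H, fun t ht => ?_⟩
  simp only [Equiv.Perm.coe_mul, Function.comp_apply]
  rw [hg₁b t ht, hf₁b (hg₁ t) (Finset.mem_image_of_mem _ ht)]

lemma one_mem_autM (hHone : ∀ σ, (1 : Equiv.Perm S) ∈ H σ) :
    (1 : Equiv.Perm (PreNode S)) ∈ AutM Γ lam H :=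
  ⟨isTreeAuto_one, compat_one hHone, compat_one hHone⟩

lemma mul_mem_autM (hHmul : ∀ σ, ∀ h₁ ∈ H σ, ∀ h₂ ∈ H σ, h₁ * h₂ ∈ H σ)
    {f g : Equiv.Perm (PreNode S)} (hf : f ∈ AutM Γ lam H) (hg : g ∈ AutM Γ lam H) :
    f * g ∈ AutM Γ lam H := by
  refine ⟨isTreeAuto_mul hf.1 hg.1, compat_mul hHmul hf.2.1 hg.2.1 hg.1, ?_⟩
  rw [mul_inv_rev]
  exact compat_mul hHmul hg.2.2 hf.2.2 (isTreeAuto_inv hf.1)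

lemma compat_relabelPerm_labelPerm (hHone : ∀ σ, (1 : Equiv.Perm S) ∈ H σ)
    {p : PreNode S} {k : ℕ} {h : Equiv.Perm S} (hh : h ∈ H (proj p ++ [k])) :
    Compat Γ lam H (relabelPerm p (labelPerm k h)) := by
  intro c _ j _ _ _
  by_cases hcj : c = p ∧ j = k
  · obtain ⟨rfl, rfl⟩ := hcj
    exact ⟨h, hh, fun t _ => by simp [relabel_append]⟩
  · refine ⟨1, hHone _, fun t _ => ?_⟩
    exact relabel_append_singleton fun hc => labelPerm_of_ne _ _ fun hj => hcj ⟨hc, hj⟩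

lemma relabelPerm_labelPerm_mem_autM (hHone : ∀ σ, (1 : Equiv.Perm S) ∈ H σ)
    (hHinv : ∀ σ, ∀ h₁ ∈ H σ, h₁⁻¹ ∈ H σ)
    {p : PreNode S} {k : ℕ} {h : Equiv.Perm S} (hh : h ∈ H (proj p ++ [k])) :
    relabelPerm p (labelPerm k h) ∈ AutM Γ lam H := by
  refine ⟨isTreeAuto_relabelPerm (shape_labelPerm k h),
    compat_relabelPerm_labelPerm hHone hh, ?_⟩
  rw [relabelPerm_inv, labelPerm_inv]
  exact compat_relabelPerm_labelPerm hHone (hHinv _ _ hh)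

lemma relabel_labelPerm_eq_self (hA : ∀ z ∈ A, ∀ c, c <+: z → c ∈ A)
    {p : PreNode S} {k : ℕ} {h : Equiv.Perm S}
    (hfix : ∀ u, p ++ [(k, some u)] ∈ A → h u = u) {z : PreNode S} (hz : z ∈ A) :
    relabel p (labelPerm k h) z = z := by
  refine relabel_eq_self fun ⟨j, o⟩ hx => ?_
  rcases eq_or_ne j k with rfl | hjk
  · cases o with
    | none => simp [labelPerm_apply]
    | some u => simp [hfix u (hA z hz _ hx)]
  · exact labelPerm_of_ne _ _ hjk

variable (H A) in
/-- `Relabels H A p x y`: `p ++ x` is carried to `p ++ y` by changing one label at a time,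
through an element of the relevant `H σ` fixing the labels of the siblings lying in `A`. -/
inductive Relabels : PreNode S → PreNode S → PreNode S → Prop
  | nil (p : PreNode S) : Relabels p [] []
  | same {p x y : PreNode S} (a : ℕ × Option S) :
      Relabels (p ++ [a]) x y → Relabels p (a :: x) (a :: y)
  | move {p x y : PreNode S} {k : ℕ} {t t' : S} (h : Equiv.Perm S) (hH : h ∈ H (proj p ++ [k]))
      (hfix : ∀ u, p ++ [(k, some u)] ∈ A → h u = u) (ht : h t = t') :
      Relabels (p ++ [(k, some t')]) x y → Relabels p ((k, some t) :: x) ((k, some t') :: y)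

lemma Relabels.prepend {p : PreNode S} {x y : PreNode S} :
    ∀ {c : PreNode S}, Relabels H A (p ++ c) x y → Relabels H A p (c ++ x) (c ++ y)
  | [], hr => by simpa using hr
  | a :: c, hr => .same a (Relabels.prepend (p := p ++ [a]) (by simpa using hr))

lemma Relabels.exists_mem_autM (hHone : ∀ σ, (1 : Equiv.Perm S) ∈ H σ)
    (hHmul : ∀ σ, ∀ h₁ ∈ H σ, ∀ h₂ ∈ H σ, h₁ * h₂ ∈ H σ)
    (hHinv : ∀ σ, ∀ h₁ ∈ H σ, h₁⁻¹ ∈ H σ)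
    (hA : ∀ z ∈ A, ∀ c, c <+: z → c ∈ A) {p x y : PreNode S} (hr : Relabels H A p x y) :
    ∃ g ∈ AutM Γ lam H, (∀ z ∈ A, g z = z) ∧ g (p ++ x) = p ++ y := by
  induction hr with
  | nil p => exact ⟨1, one_mem_autM hHone, fun _ _ => rfl, rfl⟩
  | same a _ ih =>
    obtain ⟨g, hg, hgA, hgx⟩ := ih
    exact ⟨g, hg, hgA, by simpa using hgx⟩
  | @move p x y k t t' h hH hfix ht _ ih =>
    obtain ⟨g, hg, hgA, hgx⟩ := ih
    refine ⟨g * relabelPerm p (labelPerm k h),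
      mul_mem_autM hHmul hg (relabelPerm_labelPerm_mem_autM hHone hHinv hH),
      fun z hz => ?_, ?_⟩
    · simp [relabel_labelPerm_eq_self hA hfix hz, hgA z hz]
    · simpa [relabel_append, ht] using hgx

lemma relabels_of_forall_not_prefix (hclosed : ∀ l ∈ Γ, l.dropLast ∈ Γ)
    (hHtrans : ∀ σ ∈ Γ, lam σ = true → ∀ s t : S, ∃ hh ∈ H σ, hh s = t) :
    ∀ {x y q p : PreNode S}, (∀ z ∈ A, ¬ p <+: z) → proj q = proj p → proj x = proj y →
      q ++ x ∈ NodeSet Γ lam S → p ++ y ∈ NodeSet Γ lam S → Relabels H A p x y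
  | [], [], _, p, _, _, _, _, _ => .nil p
  | [], _ :: _, _, _, _, _, hxy, _, _ => by simp at hxy
  | _ :: _, [], _, _, _, _, hxy, _, _ => by simp at hxy
  | (j, o) :: x, (j', o') :: y, q, p, hp, hqp, hxy, hqx, hpy => by
    obtain ⟨rfl, hxy_tail⟩ : j = j' ∧ proj x = proj y := by simpa using hxy
    have hσ := proj_append_singleton_mem_of_append_cons_mem hclosed hpy
    have ho := isSome_eq_lam_of_append_cons_mem hqx
    have ho' := isSome_eq_lam_of_append_cons_mem hpy
    have htail : Relabels H A (p ++ [(j, o')]) x y :=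
      relabels_of_forall_not_prefix (q := q ++ [(j, o)]) hclosed hHtrans
        (fun z hz hpz => hp z hz ((List.prefix_append _ _).trans hpz)) (by simp [hqp])
        hxy_tail (by simpa using hqx) (by simpa using hpy)
    simp only [hqp] at ho
    cases hlam : lam (proj p ++ [j]) <;> rw [hlam] at ho ho'
    · obtain rfl : o = none := by simpa using ho
      obtain rfl : o' = none := by simpa using ho'
      exact .same _ htail
    · obtain ⟨t, rfl⟩ := Option.isSome_iff_exists.1 ho
      obtain ⟨t', rfl⟩ := Option.isSome_iff_exists.1 ho'
      obtain ⟨h, hH, ht⟩ := hHtrans _ hσ hlam t t'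
      exact .move h hH (fun u hu => (hp _ hu (List.prefix_append _ _)).elim) ht htail

end TreePlanDef

theorem construction_key_lemma_general
    {S : Type*}
    (Γ : Finset (List ℕ)) (lam : List ℕ → Bool)
    (hclosed : ∀ l ∈ Γ, l.dropLast ∈ Γ)
    -- the component automorphism groups `H σ = Aut(N_σ)` (transported to `S` via `f_σ`)
    (H : List ℕ → Set (Equiv.Perm S))
    (hHone : ∀ σ, (1 : Equiv.Perm S) ∈ H σ)
    (hHmul : ∀ σ, ∀ h₁ ∈ H σ, ∀ h₂ ∈ H σ, h₁ * h₂ ∈ H σ)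
    (hHinv : ∀ σ, ∀ h₁ ∈ H σ, h₁⁻¹ ∈ H σ)
    -- `|S₁(T_σ)| = 1`: `H σ` is transitive
    (hHtrans : ∀ σ ∈ Γ, lam σ = true → ∀ s t : S, ∃ hh ∈ H σ, hh s = t)
    -- the finite tree-closed parameter set
    (A : Set (PreNode S))
    (hAclosed : tclSet Γ lam (Set.univ : Set S) A = A)
    -- the elements `e ≠ e'` and `b ≤ e`, `b' ≤ e'` just above the meet `e ⊓ e'`
    (e : PreNode S) (he : e ∈ NodeSet Γ lam S)
    (e' : PreNode S) (he' : e' ∈ NodeSet Γ lam S)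
    (b b' : PreNode S) (hb : b <+: e) (hb' : b' <+: e')
    (k : ℕ) (s s' : S)
    (hbshape : b = meet e e' ++ [(k, some s)])
    (hb'shape : b' = meet e e' ++ [(k, some s')])
    -- `tp_Γ(e/A) = tp_Γ(e'/A)`
    (htreetype : ∃ τ : Equiv.Perm (PreNode S),
      IsTreeAuto Γ lam τ ∧ (∀ x ∈ A, τ x = x) ∧ τ e = e')
    -- `tp^{M(b)}(b / A ∩ M(b)) = tp^{M(b)}(b' / A ∩ M(b))`
    (hcomptype : ∃ hh ∈ H (proj b),
      (∀ t : S, (meet e e' ++ [(k, some t)]) ∈ A → hh t = t) ∧ hh s = s') :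
    ∃ g ∈ AutM Γ lam H, (∀ x ∈ A, g x = x) ∧ g e = e' := by
  obtain ⟨τ, hτ, -, hτe⟩ := htreetype
  obtain ⟨h₀, hh₀, hfix₀, hs⟩ := hcomptype
  have hA : ∀ z ∈ A, ∀ c, c <+: z → c ∈ A :=
    fun z hz _ => prefix_mem_of_tclSet_eq hAclosed hz
  have hb'A : ∀ z ∈ A, ¬ b' <+: z := by
    intro z hz hb'z
    have hss' : s = s' := h₀.injective (hs.trans (hfix₀ s' (hb'shape ▸ hA z hz b' hb'z)).symm)
    exact meet_append_not_prefix (hbshape ▸ hb) (hss' ▸ hb'shape ▸ hb')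
  have hproj : proj e = proj e' := (hτ.2.2.1 e he).symm.trans (congrArg proj hτe)
  have hpb : proj b = proj b' := by simp [hbshape, hb'shape]
  obtain ⟨r, hr⟩ := hb
  obtain ⟨r', hr'⟩ := hb'
  have htail : Relabels H A b' r r' :=
    relabels_of_forall_not_prefix hclosed hHtrans hb'A hpb
      (by simpa [← hr, ← hr', hpb] using hproj) (hr ▸ he) (hr' ▸ he')
  have hmove : Relabels H A (meet e e') ((k, some s) :: r) ((k, some s') :: r') :=
    .move h₀ (by simpa [hbshape] using hh₀) hfix₀ hs (hb'shape ▸ htail)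
  obtain ⟨g, hg, hgA, hge⟩ := (hmove.prepend (p := [])).exists_mem_autM hHone hHmul hHinv hA
  refine ⟨g, hg, hgA, ?_⟩
  rw [← hr, ← hr', hbshape, hb'shape]
  simpa using hge

/-- key lemma for the constructed NIC structure.  `M` is the `L*`-structure
built from the tree plan `Γ`, the countably infinite set `S`, and for each infinity node
`σ ∈ I(Γ)` a countable model `N_σ` of an ℵ₀-categorical, algebraically trivial,
quantifier-eliminating theory `T_σ` with exactly one 1-type, whose universe is identified
with `S` via the fixed bijection `f_σ`.  Model-theoretically `N_σ` enters only through its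
automorphism group, represented here by an oligomorphic, transitive, algebraically
trivial permutation group `H σ` on `S` (types in `N_σ` over finite sets = orbits of
`H σ`), and `Aut(M)` is the group `AutM` of tree automorphisms compatible with the `H σ`.
Claim: for any finite tree-closed `A ⊆ Γ(S)` and distinct `e, e' ∈ Γ(S)`, if
`tp_Γ(e/A) = tp_Γ(e'/A)` (an `A`-fixing tree automorphism takes `e` to `e'`) and, letting
`b ≤ e`, `b' ≤ e'` with `pred b = e ⊓ e' = pred b'`, the component types
`tp^{M(b)}(b / A ∩ M(b))` and `tp^{M(b)}(b' / A ∩ M(b))` are equal (an `H`-automorphism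
fixing the labels of `A ∩ M(b)` takes the label of `b` to that of `b'`), then there is an
automorphism `g ∈ Aut(M/A)` with `g e = e'`. -/
theorem construction_key_lemma
    {S : Type*} [Countable S] [Infinite S]
    (Γ : Finset (List ℕ)) (lam : List ℕ → Bool)
    (hroot : ([] : List ℕ) ∈ Γ) (hclosed : ∀ l ∈ Γ, l.dropLast ∈ Γ)
    (hlamroot : lam [] = false)
    -- the component automorphism groups `H σ = Aut(N_σ)` (transported to `S` via `f_σ`)
    (H : List ℕ → Set (Equiv.Perm S))
    (hHone : ∀ σ, (1 : Equiv.Perm S) ∈ H σ)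
    (hHmul : ∀ σ, ∀ h₁ ∈ H σ, ∀ h₂ ∈ H σ, h₁ * h₂ ∈ H σ)
    (hHinv : ∀ σ, ∀ h₁ ∈ H σ, h₁⁻¹ ∈ H σ)
    -- `T_σ` is ℵ₀-categorical: `H σ` is oligomorphic
    (hHcat : ∀ σ ∈ Γ, lam σ = true → ∀ n : ℕ,
      {O : Set (Fin n → S) | ∃ s : Fin n → S,
        O = {t | ∃ hh ∈ H σ, ∀ i, hh (s i) = t i}}.Finite)
    -- `|S₁(T_σ)| = 1`: `H σ` is transitive
    (hHtrans : ∀ σ ∈ Γ, lam σ = true → ∀ s t : S, ∃ hh ∈ H σ, hh s = t)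
    -- `T_σ` is algebraically trivial
    (hHtriv : ∀ σ ∈ Γ, lam σ = true → ∀ B : Finset S, ∀ s : S, s ∉ B →
      {t : S | ∃ hh ∈ H σ, (∀ x ∈ B, hh x = x) ∧ hh s = t}.Infinite)
    -- the finite tree-closed parameter set
    (A : Set (PreNode S)) (hAfin : A.Finite) (hAsub : A ⊆ NodeSet Γ lam S)
    (hAclosed : tclSet Γ lam (Set.univ : Set S) A = A)
    -- the elements `e ≠ e'` and `b ≤ e`, `b' ≤ e'` just above the meet `e ⊓ e'`
    (e : PreNode S) (he : e ∈ NodeSet Γ lam S)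
    (e' : PreNode S) (he' : e' ∈ NodeSet Γ lam S) (hne : e ≠ e')
    (b b' : PreNode S) (hb : b <+: e) (hb' : b' <+: e')
    (hpredb : b.dropLast = meet e e') (hpredb' : b'.dropLast = meet e e')
    (k : ℕ) (s s' : S)
    (hbshape : b = meet e e' ++ [(k, some s)])
    (hb'shape : b' = meet e e' ++ [(k, some s')])
    -- `tp_Γ(e/A) = tp_Γ(e'/A)`
    (htreetype : ∃ τ : Equiv.Perm (PreNode S),
      IsTreeAuto Γ lam τ ∧ (∀ x ∈ A, τ x = x) ∧ τ e = e')
    -- `tp^{M(b)}(b / A ∩ M(b)) = tp^{M(b)}(b' / A ∩ M(b))`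
    (hcomptype : ∃ hh ∈ H (proj b),
      (∀ t : S, (meet e e' ++ [(k, some t)]) ∈ A → hh t = t) ∧ hh s = s') :
    ∃ g ∈ AutM Γ lam H, (∀ x ∈ A, g x = x) ∧ g e = e' :=
  construction_key_lemma_general Γ lam hclosed H hHone hHmul hHinv hHtrans A hAclosed e he e' he' b
    b' hb hb' k s s' hbshape hb'shape htreetype hcomptype
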